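/- Let n = 2, K₀ ≥ 2, K ≥ 6K₀ and α > 0. Then ℛ² ⊆ {y ∈ ℝ² : |y| < 7αK}; that is, every y ∈ 𝔻 which does not belong to ℛ⁰ ∪ ℛ¹ satisfies |y| < 7αK. -/

import Mathlib

open MeasureTheory

noncomputable section

/-- The Euclidean norm `|y|` of `y ∈ ℝⁿ`. -/
def eNorm {n : ℕ} (y : Fin n → ℝ) : ℝ := Real.sqrt (∑ i, y i ^ 2)

/-- The Euclidean norm `|k|` of an integer vector `k ∈ ℤⁿ`. -/
def eNormZ {n : ℕ} (k : Fin n → ℤ) : ℝ := Real.sqrt (∑ i, (k i : ℝ) ^ 2)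

/-- `|k|₁ := ∑ᵢ |kᵢ|`, as a real number. -/
def norm1 {n : ℕ} (k : Fin n → ℤ) : ℝ := ∑ i, |(k i : ℝ)|

/-- `ℤⁿ_*`: nonzero integer vectors whose first nonzero component is positive. -/
def ZnStar {n : ℕ} (k : Fin n → ℤ) : Prop :=
  k ≠ 0 ∧ ∀ j, (∀ i, i < j → k i = 0) → 0 ≤ k j

/-- `𝒢ⁿ`: generators of one-dimensional maximal lattices, i.e. `k ∈ ℤⁿ_*` with
`gcd (k₁, …, kₙ) = 1`. -/
def Gen {n : ℕ} (k : Fin n → ℤ) : Prop :=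
  ZnStar k ∧ Finset.univ.gcd (fun i => (k i).natAbs) = 1

/-- `𝒢ⁿ_K := {k ∈ 𝒢ⁿ : |k|₁ ≤ K}`. -/
def GenK {n : ℕ} (K : ℝ) (k : Fin n → ℤ) : Prop := Gen k ∧ norm1 k ≤ K

/-- The dot product `y · k` of `y ∈ ℝⁿ` with an integer vector `k`. -/
def dotZ {n : ℕ} (y : Fin n → ℝ) (k : Fin n → ℤ) : ℝ := ∑ i, y i * (k i : ℝ)

/-- The orthogonal projection `π_k^⊥ y := y − ((y·k)/|k|²) k` of `y` onto the orthogonal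
complement of `k`. -/
def perpZ {n : ℕ} (y : Fin n → ℝ) (k : Fin n → ℤ) : Fin n → ℝ :=
  y - ((dotZ y k) / (∑ i, (k i : ℝ) ^ 2)) • fun i => (k i : ℝ)

/-- The open unit ball `𝔻 := {y ∈ ℝⁿ : |y| < 1}`. -/
def unitBall (n : ℕ) : Set (Fin n → ℝ) := {y | eNorm y < 1}

/-- The nonresonant set `ℛ⁰ := {y ∈ 𝔻 : |y·k| > α/2 ∀ k ∈ 𝒢ⁿ_{K₀}}`. -/
def R0 (n : ℕ) (α K₀ : ℝ) : Set (Fin n → ℝ) :=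
  {y | y ∈ unitBall n ∧ ∀ k : Fin n → ℤ, GenK K₀ k → α / 2 < |dotZ y k|}

/-- The simply-resonant set
`ℛ¹_k := {y ∈ 𝔻 : |y·k| < α, |π_k^⊥ y·ℓ| > 3αK/|k| ∀ ℓ ∈ 𝒢ⁿ_K \ ℤk}`. -/
def R1k (n : ℕ) (α K : ℝ) (k : Fin n → ℤ) : Set (Fin n → ℝ) :=
  {y | y ∈ unitBall n ∧ |dotZ y k| < α ∧
    ∀ ℓ : Fin n → ℤ, GenK K ℓ → (¬ ∃ m : ℤ, ℓ = m • k) →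
      3 * α * K / eNormZ k < |dotZ (perpZ y k) ℓ|}

/-- `ℛ¹ := ⋃_{k ∈ 𝒢ⁿ_{K₀}} ℛ¹_k`. -/
def R1 (n : ℕ) (α K₀ K : ℝ) : Set (Fin n → ℝ) :=
  ⋃ k ∈ {k : Fin n → ℤ | GenK K₀ k}, R1k n α K k

/-- The (neighborhood of) double resonances `ℛ² := 𝔻 \ (ℛ⁰ ∪ ℛ¹)`. -/
def R2 (n : ℕ) (α K₀ K : ℝ) : Set (Fin n → ℝ) :=
  unitBall n \ (R0 n α K₀ ∪ R1 n α K₀ K)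

end

/-! Not being in `ℛ⁰` produces `k ∈ 𝒢²_{K₀}` with `|y·k| ≤ α/2`, and not being in `ℛ¹_k` then
produces `ℓ ∈ 𝒢²_K \ ℤk` with `|π_k^⊥ y·ℓ| ≤ 3αK/|k|`; in particular `K ≥ |ℓ|₁ ≥ 1`. In the plane,
with the cross product `y × k = y₀k₁ − y₁k₀`, one has `π_k^⊥ y·ℓ = (y × k)(ℓ × k)/|k|²`, and `ℓ × k`
is a nonzero integer because `k` is primitive, so `|y × k| ≤ 3αK|k|`. Lagrange's identity
`|y|²|k|² = (y·k)² + (y × k)²` then gives `|y|² ≤ α²/4 + 9α²K² < (7αK)²`. -/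

def crossZ (y : Fin 2 → ℝ) (k : Fin 2 → ℤ) : ℝ := y 0 * k 1 - y 1 * k 0

lemma one_le_sum_sq_of_ne_zero {n : ℕ} {k : Fin n → ℤ} (hk : k ≠ 0) :
    1 ≤ ∑ i, (k i : ℝ) ^ 2 := by
  obtain ⟨i, hi⟩ := Function.ne_iff.mp hk
  have hi' : (1 : ℝ) ≤ (k i : ℝ) ^ 2 := by
    rw [← sq_abs, ← Int.cast_abs]
    exact one_le_pow₀ (by exact_mod_cast Int.one_le_abs hi)
  exact hi'.trans (Finset.single_le_sum (fun j _ => sq_nonneg (k j : ℝ)) (Finset.mem_univ i))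

lemma one_le_norm1_of_ne_zero {n : ℕ} {k : Fin n → ℤ} (hk : k ≠ 0) : 1 ≤ norm1 k := by
  obtain ⟨i, hi⟩ := Function.ne_iff.mp hk
  have hi' : (1 : ℝ) ≤ |(k i : ℝ)| := by
    rw [← Int.cast_abs]
    exact_mod_cast Int.one_le_abs hi
  exact hi'.trans (Finset.single_le_sum (fun j _ => abs_nonneg (k j : ℝ)) (Finset.mem_univ i))

lemma Gen.isCoprime_two {k : Fin 2 → ℤ} (hk : Gen k) : IsCoprime (k 0) (k 1) := by
  have h := hk.2
  rw [show (Finset.univ : Finset (Fin 2)) = {0, 1} from rfl, Finset.gcd_insert,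
    Finset.gcd_singleton, normalize_eq] at h
  exact Int.isCoprime_iff_gcd_eq_one.mpr h

lemma exists_eq_smul_of_crossZ_eq_zero {k ℓ : Fin 2 → ℤ} (hk : IsCoprime (k 0) (k 1))
    (h : crossZ (fun i => (ℓ i : ℝ)) k = 0) : ∃ m : ℤ, ℓ = m • k := by
  obtain ⟨a, b, hab⟩ := hk
  have h' : ℓ 0 * k 1 = ℓ 1 * k 0 := by
    simp only [crossZ, sub_eq_zero] at h
    exact_mod_cast h
  refine ⟨a * ℓ 0 + b * ℓ 1, funext fun i => ?_⟩
  fin_cases i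
  · show ℓ 0 = (a * ℓ 0 + b * ℓ 1) * k 0
    linear_combination (-ℓ 0) * hab + b * h'
  · show ℓ 1 = (a * ℓ 0 + b * ℓ 1) * k 1
    linear_combination (-ℓ 1) * hab - a * h'

lemma one_le_abs_crossZ {k ℓ : Fin 2 → ℤ} (hk : IsCoprime (k 0) (k 1))
    (hℓ : ¬ ∃ m : ℤ, ℓ = m • k) : 1 ≤ |crossZ (fun i => (ℓ i : ℝ)) k| := by
  have hint : crossZ (fun i => (ℓ i : ℝ)) k = ((ℓ 0 * k 1 - ℓ 1 * k 0 : ℤ) : ℝ) := by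
    push_cast [crossZ]; rfl
  have hne : ℓ 0 * k 1 - ℓ 1 * k 0 ≠ 0 := fun h0 =>
    hℓ (exists_eq_smul_of_crossZ_eq_zero hk (by rw [hint, h0, Int.cast_zero]))
  rw [hint, ← Int.cast_abs]
  exact_mod_cast Int.one_le_abs hne

lemma dotZ_perpZ_eq_crossZ_mul_crossZ {k : Fin 2 → ℤ} (hk : k ≠ 0) (y : Fin 2 → ℝ)
    (ℓ : Fin 2 → ℤ) :
    dotZ (perpZ y k) ℓ = crossZ y k * crossZ (fun i => (ℓ i : ℝ)) k / ∑ i, (k i : ℝ) ^ 2 := by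
  have hS := (one_le_sum_sq_of_ne_zero hk).trans_lt' one_pos |>.ne'
  simp only [Fin.sum_univ_two] at hS ⊢
  simp only [dotZ, perpZ, crossZ, Pi.sub_apply, Pi.smul_apply, smul_eq_mul, Fin.sum_univ_two]
  field_simp
  ring

lemma sum_sq_mul_sum_sq_eq_dotZ_sq_add_crossZ_sq (y : Fin 2 → ℝ) (k : Fin 2 → ℤ) :
    (∑ i, y i ^ 2) * ∑ i, (k i : ℝ) ^ 2 = dotZ y k ^ 2 + crossZ y k ^ 2 := by
  simp only [dotZ, crossZ, Fin.sum_univ_two]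
  ring

lemma exists_of_mem_R2 {n : ℕ} {α K₀ K : ℝ} (hα : 0 < α) {y : Fin n → ℝ}
    (hy : y ∈ R2 n α K₀ K) :
    ∃ k ℓ : Fin n → ℤ, GenK K₀ k ∧ |dotZ y k| ≤ α / 2 ∧ GenK K ℓ ∧ (¬ ∃ m : ℤ, ℓ = m • k) ∧
      |dotZ (perpZ y k) ℓ| ≤ 3 * α * K / eNormZ k := by
  obtain ⟨hyD, hnot⟩ := hy
  obtain ⟨k, hk, hyk⟩ : ∃ k, GenK K₀ k ∧ |dotZ y k| ≤ α / 2 := by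
    by_contra! h
    exact hnot (Or.inl ⟨hyD, h⟩)
  obtain ⟨ℓ, hℓ, hℓk, hyℓ⟩ : ∃ ℓ, GenK K ℓ ∧ (¬ ∃ m : ℤ, ℓ = m • k) ∧
      |dotZ (perpZ y k) ℓ| ≤ 3 * α * K / eNormZ k := by
    by_contra! h
    exact hnot (Or.inr (Set.mem_biUnion hk ⟨hyD, by linarith, fun ℓ hℓ hℓk => h ℓ hℓ (not_exists.mp hℓk)⟩))
  exact ⟨k, ℓ, hk, hyk, hℓ, hℓk, hyℓ⟩

lemma crossZ_sq_le {α K : ℝ} {y : Fin 2 → ℝ} {k ℓ : Fin 2 → ℤ} (hk : Gen k)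
    (hℓk : ¬ ∃ m : ℤ, ℓ = m • k) (hyℓ : |dotZ (perpZ y k) ℓ| ≤ 3 * α * K / eNormZ k) :
    crossZ y k ^ 2 ≤ (3 * α * K) ^ 2 * ∑ i, (k i : ℝ) ^ 2 := by
  set S := ∑ i, (k i : ℝ) ^ 2
  have hS : 0 < S := (one_le_sum_sq_of_ne_zero hk.1.1).trans_lt' one_pos
  have hD := one_le_abs_crossZ hk.isCoprime_two hℓk
  rw [dotZ_perpZ_eq_crossZ_mul_crossZ hk.1.1, abs_div, abs_mul, abs_of_pos hS, eNormZ,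
    div_le_iff₀ hS] at hyℓ
  have h : |crossZ y k| ≤ 3 * α * K * √S := calc
    |crossZ y k| ≤ |crossZ y k| * |crossZ (fun i => (ℓ i : ℝ)) k| :=
      le_mul_of_one_le_right (abs_nonneg _) hD
    _ ≤ 3 * α * K / √S * S := hyℓ
    _ = 3 * α * K * √S := by rw [div_mul_eq_mul_div, mul_div_assoc, Real.div_sqrt]
  calc crossZ y k ^ 2 = |crossZ y k| ^ 2 := (sq_abs _).symm
    _ ≤ (3 * α * K * √S) ^ 2 := pow_le_pow_left₀ (abs_nonneg _) h 2
    _ = (3 * α * K) ^ 2 * S := by rw [mul_pow, Real.sq_sqrt hS.le]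

theorem R2_subset_ball_two_dim_general (α K₀ K : ℝ) (hα : 0 < α) :
    R2 2 α K₀ K ⊆ {y : Fin 2 → ℝ | eNorm y < 7 * α * K} := by
  intro y hy
  obtain ⟨k, ℓ, hk, hyk, hℓ, hℓk, hyℓ⟩ := exists_of_mem_R2 hα hy
  have hK : 1 ≤ K := (one_le_norm1_of_ne_zero hℓ.1.1.1).trans hℓ.2
  have hS := one_le_sum_sq_of_ne_zero hk.1.1.1
  have hcross := crossZ_sq_le hk.1 hℓk hyℓ
  have hdot : dotZ y k ^ 2 ≤ (α / 2) ^ 2 := sq_le_sq' (abs_le.mp hyk).1 (abs_le.mp hyk).2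
  have hS0 : 0 < ∑ i, (k i : ℝ) ^ 2 := one_pos.trans_le hS
  have hy2 : ∑ i, y i ^ 2 ≤ (α / 2) ^ 2 + (3 * α * K) ^ 2 := by
    refine le_of_mul_le_mul_right ?_ hS0
    rw [sum_sq_mul_sum_sq_eq_dotZ_sq_add_crossZ_sq, add_mul]
    nlinarith [le_mul_of_one_le_right (sq_nonneg (α / 2)) hS]
  refine (Real.sqrt_lt' (by positivity)).mpr (hy2.trans_lt ?_)
  have hK2 : α ^ 2 ≤ α ^ 2 * K ^ 2 := le_mul_of_one_le_right (sq_nonneg α) (one_le_pow₀ hK)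
  nlinarith [pow_pos hα 2]

/-- For `n = 2`, `K₀ ≥ 2`, `K ≥ 6K₀` and `α > 0`, one has
`ℛ² ⊆ {y ∈ ℝ² : |y| < 7αK}`: every `y ∈ 𝔻` not in `ℛ⁰ ∪ ℛ¹` satisfies `|y| < 7αK`. -/
theorem R2_subset_ball_two_dim (α K₀ K : ℝ) (hα : 0 < α) (hK₀ : 2 ≤ K₀) (hK : 6 * K₀ ≤ K) :
    R2 2 α K₀ K ⊆ {y : Fin 2 → ℝ | eNorm y < 7 * α * K} :=
  R2_subset_ball_two_dim_general α K₀ K hα
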